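/- Suppose the random walk on T is transient, every nonzero one-step transition probability of the walk is at least ε₀ for some ε₀ > 0, and the spectral radius of the walk is strictly smaller than 1. Then there exists a constant C_F < ∞ such that F′(−i|1) ≤ C_F for all i ∈ G, i.e., the derivatives at z = 1 of the first-descent generating functions F(−i|z) are uniformly bounded over all labels i. -/

import Mathlib

/-!
Let `ρ < 1` be the spectral radius, `x` a vertex with label `i` and `y` its parent. A first
descent from `x` to `y` in `n` steps, preceded by the step `y → x` of probability at least `ε₀`,
is a return to `y` in `n + 1` steps, so `F_n(-i) ≤ p⁽ⁿ⁺¹⁾(y,y) / ε₀`. Since `n ↦ p⁽ⁿ⁾(y,y)` is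
supermultiplicative and `y` communicates with the root, `p⁽ⁿ⁾(y,y) ≤ ρⁿ` for every `n`. Hence
`F'(-i|1) ≤ ρ / ε₀ · Σ n ρⁿ < ∞`.
-/

open Filter Topology MeasureTheory Set
open scoped ENNReal NNReal Classical

/-- Vertices of the directed cover of the directed graph `(V, E)` rooted at `i₀`:
finite directed paths in `G` starting at `i₀`. -/
def Cover (V : Type) (E : V → V → Prop) (i₀ : V) : Type :=
  {l : List V // List.Chain E i₀ l}

namespace Cover

variable {V : Type} {E : V → V → Prop} {i₀ : V}

instance : MeasurableSpace (Cover V E i₀) := ⊤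

/-- The root of the directed cover: the trivial path. -/
def root : Cover V E i₀ := ⟨[], List.Chain.nil⟩

/-- The label of a cover vertex: the endpoint of the corresponding path in `G`. -/
def lbl (x : Cover V E i₀) : V := x.val.getLastD i₀

/-- The height of a cover vertex: the graph distance in the tree from the root. -/
def ht (x : Cover V E i₀) : ℕ := x.val.length

/-- `y.IsChildOf x` holds iff `y` is a direct descendant (successor) of `x` in the tree. -/
def IsChildOf (y x : Cover V E i₀) : Prop := ∃ j : V, y.val = x.val ++ [j]

end Cover

/-- One-step transition probabilities of the nearest-neighbour random walk on the
directed cover, with forward probabilities `pf` (on labels), backward probabilities `pm`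
and a loop at the root. -/
noncomputable def coverP {V : Type} (E : V → V → Prop) (i₀ : V)
    (pf : V → V → ℝ) (pm : V → ℝ) (x y : Cover V E i₀) : ℝ :=
  if Cover.IsChildOf y x then pf x.lbl y.lbl
  else if x.val = [] ∧ y.val = [] then pm i₀
  else if Cover.IsChildOf x y then pm x.lbl
  else 0

/-- `n`-step transition probabilities of the Markov chain with one-step kernel `p`. -/
noncomputable def kpow {S : Type} (p : S → S → ℝ) : ℕ → S → S → ℝ
  | 0 => fun x y => if x = y then 1 else 0
  | n + 1 => fun x y => ∑' z : S, p x z * kpow p n z y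

/-- Taboo probabilities: `taboo p w n x y` is the probability that the Markov chain with
one-step kernel `p` started at `x` is at `y` at time `n`, avoiding `w` at all times `m < n`. -/
noncomputable def taboo {S : Type} (p : S → S → ℝ) (w : S) : ℕ → S → S → ℝ
  | 0 => fun x y => if x = y then 1 else 0
  | n + 1 => fun x y => if x = w then 0 else ∑' z : S, p x z * taboo p w n z y

/-- The probability that the Markov chain with kernel `p` started at `o` returns to `o`
(the sum over `n` of the probabilities of a first return at time `n + 1`). -/
noncomputable def returnProbA {S : Type} (p : S → S → ℝ) (o : S) : ℝ≥0∞ :=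
  ∑' n : ℕ, ENNReal.ofReal (∑' z : S, p o z * taboo p o n z o)

/-- The upper Collatz–Wielandt number `λ⁺(M)` of a nonnegative matrix `M`. -/
noncomputable def lambdaPlus {V : Type} (M : V → V → ℝ) : ℝ :=
  sSup {lam : ℝ | 0 < lam ∧ ∃ f : V → ℝ, (∀ i, 0 ≤ f i) ∧ f ≠ 0 ∧
    BddAbove (Set.range f) ∧ ∀ i, lam * f i ≤ ∑' j : V, M i j * f j}

/-- The `ℓ∞`-spectral radius `r∞(M) = lim_n ‖Mⁿ‖_∞^(1/n)` of a nonnegative matrix `M`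
(the limit exists; it is expressed via `limsup`). -/
noncomputable def rInfty {V : Type} (M : V → V → ℝ) : ℝ :=
  Filter.limsup (fun n : ℕ => (⨆ i : V, ∑' j : V, kpow M n i j) ^ ((n : ℝ)⁻¹)) Filter.atTop

/-- `(Ω, P, X)` is a realization of the nearest-neighbour random walk on the directed cover
started at the root: the finite-dimensional distributions are the Markovian ones given by the
kernel `coverP E i₀ pf pm` and starting point `Cover.root`. -/
def IsCoverWalk {V : Type} (E : V → V → Prop) (i₀ : V) (pf : V → V → ℝ) (pm : V → ℝ)
    {Ω : Type} [MeasurableSpace Ω] (P : Measure Ω) (X : ℕ → Ω → Cover V E i₀) : Prop :=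
  (∀ n, Measurable (X n)) ∧
  ∀ (n : ℕ) (path : ℕ → Cover V E i₀),
    P {ω | ∀ k ≤ n, X k ω = path k} =
      (if path 0 = Cover.root then 1 else 0) *
        ∏ k ∈ Finset.range n, ENNReal.ofReal (coverP E i₀ pf pm (path k) (path (k + 1)))

/-- The length of a path (given by its list of labels, with previous vertex `prev`)
with respect to the weight function `w` on the edges of `G`. -/
noncomputable def pathLen {V : Type} (w : V → V → ℝ) : V → List V → ℝ
  | _, [] => 0
  | prev, j :: rest => w prev j + pathLen w j rest

open Function

theorem exists_ne_zero_of_tsum_ne_zero {ι : Type} {f : ι → ℝ} (h : ∑' i, f i ≠ 0) :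
    ∃ i, f i ≠ 0 := by
  by_contra! hf
  simp [hf] at h

theorem Summable.of_tsum_ne_zero {ι : Type} {f : ι → ℝ} (h : ∑' i, f i ≠ 0) : Summable f := by
  by_contra hf
  exact h (tsum_eq_zero_of_not_summable hf)

theorem le_of_forall_pow_le_mul_pow {a b C : ℝ} (hb : 0 ≤ b) (h : ∀ j : ℕ, a ^ j ≤ C * b ^ j) :
    a ≤ b := by
  by_contra! hba
  rcases hb.eq_or_lt with rfl | hb
  · have := h 1
    simp only [pow_one, mul_zero] at this
    exact this.not_gt hba
  · obtain ⟨j, hj⟩ := pow_unbounded_of_one_lt C ((one_lt_div hb).2 hba)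
    rw [div_pow, lt_div_iff₀ (pow_pos hb j)] at hj
    exact (h j).not_gt hj

section Kernel

variable {S : Type} {p : S → S → ℝ}

theorem kpow_one_apply (x y : S) : kpow p 1 x y = p x y := by
  show ∑' z, p x z * kpow p 0 z y = p x y
  rw [tsum_eq_single y fun z hz => by simp [kpow, hz]]
  simp [kpow]

theorem kpow_nonneg (hp0 : ∀ x y, 0 ≤ p x y) : ∀ n x y, 0 ≤ kpow p n x y
  | 0, x, y => by simp only [kpow]; split_ifs <;> norm_num
  | n + 1, x, y => tsum_nonneg fun z => mul_nonneg (hp0 x z) (kpow_nonneg hp0 n z y)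

theorem summable_mul_of_support_finite {f : S → ℝ} (hf : (support f).Finite) (g : S → ℝ) :
    Summable fun z => f z * g z :=
  summable_of_hasFiniteSupport (hf.subset (support_mul_subset_left f g))

theorem kpow_le_one (hp0 : ∀ x y, 0 ≤ p x y) (hfin : ∀ x, (support (p x)).Finite)
    (hrow : ∀ x, ∑' y, p x y ≤ 1) : ∀ n x y, kpow p n x y ≤ 1
  | 0, x, y => by simp only [kpow]; split_ifs <;> norm_num
  | n + 1, x, y =>
    calc ∑' z, p x z * kpow p n z y ≤ ∑' z, p x z :=
          (summable_mul_of_support_finite (hfin x) _).tsum_le_tsum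
            (fun z => mul_le_of_le_one_right (hp0 x z) (kpow_le_one hp0 hfin hrow n z y))
            (by simpa using summable_mul_of_support_finite (hfin x) 1)
      _ ≤ 1 := hrow x

theorem kpow_mul_le (hp0 : ∀ x y, 0 ≤ p x y) (hfin : ∀ x, (support (p x)).Finite) :
    ∀ m n (x z y : S), kpow p m x z * kpow p n z y ≤ kpow p (m + n) x y
  | 0, n, x, z, y => by
    simp only [kpow, zero_add]
    split_ifs with h
    · rw [one_mul, h]
    · rw [zero_mul]; exact kpow_nonneg hp0 n x y
  | m + 1, n, x, z, y => by
    rw [show m + 1 + n = (m + n) + 1 by omega]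
    show (∑' w, p x w * kpow p m w z) * kpow p n z y ≤ ∑' w, p x w * kpow p (m + n) w y
    rw [← tsum_mul_right]
    refine Summable.tsum_le_tsum (fun w => ?_) ?_ (summable_mul_of_support_finite (hfin x) _)
    · rw [mul_assoc]
      exact mul_le_mul_of_nonneg_left (kpow_mul_le hp0 hfin m n w z y) (hp0 x w)
    · simpa only [mul_assoc] using summable_mul_of_support_finite (hfin x) _

theorem taboo_le_kpow (hp0 : ∀ x y, 0 ≤ p x y) (hfin : ∀ x, (support (p x)).Finite) (w : S) :
    ∀ n x y, taboo p w n x y ≤ kpow p n x y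
  | 0, x, y => le_rfl
  | n + 1, x, y => by
    show (if x = w then 0 else ∑' z, p x z * taboo p w n z y) ≤ ∑' z, p x z * kpow p n z y
    split_ifs
    · exact tsum_nonneg fun z => mul_nonneg (hp0 x z) (kpow_nonneg hp0 n z y)
    · exact (summable_mul_of_support_finite (hfin x) _).tsum_le_tsum
        (fun z => mul_le_mul_of_nonneg_left (taboo_le_kpow hp0 hfin w n z y) (hp0 x z))
        (summable_mul_of_support_finite (hfin x) _)

theorem exists_kpow_pos_of_reflTransGen (hp0 : ∀ x y, 0 ≤ p x y)
    (hfin : ∀ x, (support (p x)).Finite) {x y : S}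
    (h : Relation.ReflTransGen (fun a b => 0 < p a b) x y) : ∃ n, 0 < kpow p n x y := by
  induction h with
  | refl => exact ⟨0, by simp [kpow]⟩
  | @tail b c _ hbc ih =>
    obtain ⟨n, hn⟩ := ih
    refine ⟨n + 1, lt_of_lt_of_le ?_ (kpow_mul_le hp0 hfin n 1 x b c)⟩
    rw [kpow_one_apply]
    exact mul_pos hn hbc

end Kernel

/-- For `o` the root of the cover this is the spectral radius of the walk. -/
noncomputable def returnRadius {S : Type} (p : S → S → ℝ) (o : S) : ℝ :=
  limsup (fun n : ℕ => kpow p n o o ^ (n : ℝ)⁻¹) atTop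

section ReturnRadius

variable {S : Type} {p : S → S → ℝ}

theorem kpow_self_pow_le (hp0 : ∀ x y, 0 ≤ p x y) (hfin : ∀ x, (support (p x)).Finite)
    (x : S) (n : ℕ) : ∀ j, kpow p n x x ^ j ≤ kpow p (j * n) x x
  | 0 => by simp [kpow]
  | j + 1 =>
    calc kpow p n x x ^ (j + 1) = kpow p n x x ^ j * kpow p n x x := pow_succ _ _
      _ ≤ kpow p (j * n) x x * kpow p n x x :=
          mul_le_mul_of_nonneg_right (kpow_self_pow_le hp0 hfin x n j) (kpow_nonneg hp0 n x x)
      _ ≤ kpow p ((j + 1) * n) x x := by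
          rw [Nat.succ_mul]; exact kpow_mul_le hp0 hfin _ _ _ _ _

theorem isBoundedUnder_kpow_rpow (hp0 : ∀ x y, 0 ≤ p x y) (hfin : ∀ x, (support (p x)).Finite)
    (hrow : ∀ x, ∑' y, p x y ≤ 1) (o : S) :
    IsBoundedUnder (· ≤ ·) atTop fun n : ℕ => kpow p n o o ^ (n : ℝ)⁻¹ :=
  isBoundedUnder_of ⟨1, fun n => Real.rpow_le_one (kpow_nonneg hp0 n o o)
    (kpow_le_one hp0 hfin hrow n o o) (by positivity)⟩

theorem returnRadius_nonneg (hp0 : ∀ x y, 0 ≤ p x y) (hfin : ∀ x, (support (p x)).Finite)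
    (hrow : ∀ x, ∑' y, p x y ≤ 1) (o : S) : 0 ≤ returnRadius p o :=
  le_limsup_of_frequently_le
    (Frequently.of_forall fun n => Real.rpow_nonneg (kpow_nonneg hp0 n o o) _)
    (isBoundedUnder_kpow_rpow hp0 hfin hrow o)

/-- Since `n ↦ p⁽ⁿ⁾(o,o)` is supermultiplicative, `(p⁽ⁿ⁾(o,o))^(1/n)` recurs along all multiples
of `n` at least as large as its value at `n`. -/
theorem kpow_le_returnRadius_pow (hp0 : ∀ x y, 0 ≤ p x y) (hfin : ∀ x, (support (p x)).Finite)
    (hrow : ∀ x, ∑' y, p x y ≤ 1) (o : S) (n : ℕ) : kpow p n o o ≤ returnRadius p o ^ n := by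
  rcases n.eq_zero_or_pos with rfl | hn
  · simp [kpow]
  set c := kpow p n o o ^ (n : ℝ)⁻¹
  have hc0 : 0 ≤ c := Real.rpow_nonneg (kpow_nonneg hp0 n o o) _
  have hcn : c ^ n = kpow p n o o := Real.rpow_inv_natCast_pow (kpow_nonneg hp0 n o o) hn.ne'
  have hfreq : ∃ᶠ m : ℕ in atTop, c ≤ kpow p m o o ^ (m : ℝ)⁻¹ := by
    refine frequently_atTop.2 fun N => ⟨(N + 1) * n, by nlinarith, ?_⟩
    have hm : (N + 1) * n ≠ 0 := by positivity
    calc c = (c ^ ((N + 1) * n)) ^ (((N + 1) * n : ℕ) : ℝ)⁻¹ :=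
          (Real.pow_rpow_inv_natCast hc0 hm).symm
      _ ≤ kpow p ((N + 1) * n) o o ^ (((N + 1) * n : ℕ) : ℝ)⁻¹ := by
          gcongr
          rw [pow_mul', hcn]
          exact kpow_self_pow_le hp0 hfin o n (N + 1)
  rw [← hcn]
  exact pow_le_pow_left₀ hc0 (le_limsup_of_frequently_le hfreq
    (isBoundedUnder_kpow_rpow hp0 hfin hrow o)) n

theorem kpow_le_returnRadius_pow_of_communicate (hp0 : ∀ x y, 0 ≤ p x y)
    (hfin : ∀ x, (support (p x)).Finite) (hrow : ∀ x, ∑' y, p x y ≤ 1) {o x : S} {k l : ℕ}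
    (hk : 0 < kpow p k o x) (hl : 0 < kpow p l x o) (n : ℕ) :
    kpow p n x x ≤ returnRadius p o ^ n := by
  set ρ := returnRadius p o
  have hρ0 : 0 ≤ ρ := returnRadius_nonneg hp0 hfin hrow o
  refine le_of_forall_pow_le_mul_pow (C := ρ ^ (k + l) / (kpow p k o x * kpow p l x o))
    (pow_nonneg hρ0 n) fun j => ?_
  have hloop : kpow p k o x * kpow p n x x ^ j * kpow p l x o ≤ ρ ^ (k + l) * (ρ ^ n) ^ j :=
    calc kpow p k o x * kpow p n x x ^ j * kpow p l x o
        ≤ kpow p k o x * kpow p (j * n) x x * kpow p l x o := by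
          gcongr
          exact kpow_self_pow_le hp0 hfin x n j
      _ ≤ kpow p (k + j * n) o x * kpow p l x o := by
          gcongr
          exact kpow_mul_le hp0 hfin _ _ _ _ _
      _ ≤ kpow p (k + j * n + l) o o := kpow_mul_le hp0 hfin _ _ _ _ _
      _ ≤ ρ ^ (k + j * n + l) := kpow_le_returnRadius_pow hp0 hfin hrow o _
      _ = ρ ^ (k + l) * (ρ ^ n) ^ j := by ring
  rw [div_mul_eq_mul_div, le_div_iff₀ (mul_pos hk hl)]
  linarith

theorem taboo_le_returnRadius_mul_pow (hp0 : ∀ x y, 0 ≤ p x y)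
    (hfin : ∀ x, (support (p x)).Finite) (hrow : ∀ x, ∑' y, p x y ≤ 1) {o x y : S} {k l : ℕ}
    (hk : 0 < kpow p k o y) (hl : 0 < kpow p l y o) {ε₀ : ℝ} (hε₀ : 0 < ε₀)
    (hyx : ε₀ ≤ p y x) (n : ℕ) :
    taboo p y n x y ≤ returnRadius p o / ε₀ * returnRadius p o ^ n :=
  calc taboo p y n x y ≤ kpow p n x y := taboo_le_kpow hp0 hfin y n x y
    _ ≤ p y x * kpow p n x y / ε₀ := by
        rw [le_div_iff₀ hε₀, mul_comm]
        exact mul_le_mul_of_nonneg_right hyx (kpow_nonneg hp0 n x y)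
    _ ≤ kpow p (1 + n) y y / ε₀ := by
        gcongr
        simpa only [kpow_one_apply] using kpow_mul_le hp0 hfin 1 n y x y
    _ ≤ returnRadius p o ^ (1 + n) / ε₀ := by
        gcongr
        exact kpow_le_returnRadius_pow_of_communicate hp0 hfin hrow hk hl _
    _ = returnRadius p o / ε₀ * returnRadius p o ^ n := by ring

end ReturnRadius

namespace Cover

variable {V : Type} {E : V → V → Prop} {i₀ : V}

/-- The root is its own parent, matching the loop at `o`. -/
def parent (x : Cover V E i₀) : Cover V E i₀ :=
  ⟨x.val.dropLast,
    List.IsChain.prefix x.property (List.cons_prefix_cons.2 ⟨rfl, x.val.dropLast_prefix⟩)⟩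

@[simp]
theorem val_parent (x : Cover V E i₀) : x.parent.val = x.val.dropLast :=
  rfl

theorem ext_iff {x y : Cover V E i₀} : x = y ↔ x.val = y.val :=
  Subtype.ext_iff

theorem IsChildOf.val_eq {x y : Cover V E i₀} (h : x.IsChildOf y) : x.val = y.val ++ [x.lbl] := by
  obtain ⟨j, hj⟩ := h
  rw [hj, lbl, hj, List.getLastD_concat]

theorem IsChildOf.edge {x y : Cover V E i₀} (h : x.IsChildOf y) : E y.lbl x.lbl := by
  have hx : List.IsChain E ((i₀ :: y.val) ++ [x.lbl]) := by
    have := x.property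
    rwa [h.val_eq] at this
  exact (List.isChain_append.1 hx).2.2 _
    (by simp [lbl, List.getLastD_eq_getLast?, List.getLast?_cons]) _ rfl

theorem isChildOf_parent {x : Cover V E i₀} (hx : x.val ≠ []) : x.IsChildOf x.parent :=
  ⟨x.val.getLast hx, (List.dropLast_append_getLast hx).symm⟩

theorem eq_parent_iff {x z : Cover V E i₀} :
    z = x.parent ↔ (x.val = [] ∧ z.val = []) ∨ x.IsChildOf z := by
  rw [ext_iff]
  constructor
  · intro hz
    rcases eq_or_ne x.val [] with hx | hx
    · exact Or.inl ⟨hx, by rw [hz, val_parent, hx, List.dropLast_nil]⟩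
    · exact Or.inr ⟨_, by rw [hz, val_parent, List.dropLast_append_getLast hx]⟩
  · rintro (⟨hx, hz⟩ | ⟨j, hj⟩)
    · rw [hz, val_parent, hx, List.dropLast_nil]
    · rw [val_parent, hj, List.dropLast_concat]

theorem IsChildOf.ne_parent {x z : Cover V E i₀} (h : z.IsChildOf x) : z ≠ x.parent := by
  intro hz
  have := congrArg (fun w : Cover V E i₀ => w.val.length) hz
  simp [h.val_eq] at this
  omega

theorem finite_setOf_isChildOf {x : Cover V E i₀} (hx : {j | E x.lbl j}.Finite) :
    {z : Cover V E i₀ | z.IsChildOf x}.Finite :=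
  hx.of_injOn (fun _ hz => hz.edge) fun z₁ h₁ z₂ h₂ he =>
    ext_iff.2 (by rw [h₁.val_eq, h₂.val_eq, he])

theorem reflTransGen_root_of_isChildOf {R : Cover V E i₀ → Cover V E i₀ → Prop}
    (hR : ∀ x y : Cover V E i₀, x.IsChildOf y → R y x) (x : Cover V E i₀) :
    Relation.ReflTransGen R root x := by
  induction hn : x.val.length generalizing x with
  | zero =>
    obtain rfl : x = root := Subtype.ext (List.length_eq_zero_iff.1 hn)
    exact .refl
  | succ n ih =>
    have hx : x.val ≠ [] := List.ne_nil_of_length_eq_add_one hn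
    exact (ih x.parent (by simp [hn])).tail (hR _ _ (isChildOf_parent hx))

theorem exists_ne_nil_lbl_eq {i j : V} (hj : E i₀ j) (hji : Relation.ReflTransGen E j i) :
    ∃ x : Cover V E i₀, x.val ≠ [] ∧ x.lbl = i := by
  obtain ⟨l, hl, rfl⟩ := List.exists_isChain_cons_of_relationReflTransGen hji
  exact ⟨⟨j :: l, List.isChain_cons_cons.2 ⟨hj, hl⟩⟩, List.cons_ne_nil _ _,
    by simp [lbl, List.getLast_eq_getLastD, List.getLastD_eq_getLast?, List.getLast?_cons]⟩

end Cover

section CoverWalk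

variable {V : Type} {E : V → V → Prop} {i₀ : V} {pf : V → V → ℝ} {pm : V → ℝ}

open Cover

theorem coverP_to_child {x y : Cover V E i₀} (h : y.IsChildOf x) :
    coverP E i₀ pf pm x y = pf x.lbl y.lbl :=
  if_pos h

theorem coverP_eq (x z : Cover V E i₀) :
    coverP E i₀ pf pm x z =
      (if z.IsChildOf x then pf x.lbl z.lbl else 0) + if z = x.parent then pm x.lbl else 0 := by
  by_cases hc : z.IsChildOf x
  · simp [coverP, hc, hc.ne_parent]
  · rw [coverP, if_neg hc, if_neg hc, zero_add, eq_parent_iff]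
    split_ifs with h₁ h₂ <;> simp_all [lbl]

theorem coverP_to_parent {x y : Cover V E i₀} (h : x.IsChildOf y) :
    coverP E i₀ pf pm x y = pm x.lbl := by
  have hy : y = x.parent := eq_parent_iff.2 (Or.inr h)
  rw [coverP_eq, if_neg fun h' => h'.ne_parent hy, if_pos hy, zero_add]

theorem coverP_nonneg (hpf : ∀ i j, 0 ≤ pf i j) (hpm : ∀ i, 0 ≤ pm i) (x z : Cover V E i₀) :
    0 ≤ coverP E i₀ pf pm x z := by
  unfold coverP
  split_ifs <;> simp [hpf, hpm]

theorem finite_support_coverP (hout : ∀ i, {j | E i j}.Finite) (x : Cover V E i₀) :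
    (support (coverP E i₀ pf pm x)).Finite := by
  refine ((finite_setOf_isChildOf (hout x.lbl)).union (finite_singleton x.parent)).subset ?_
  intro z hz
  by_contra h
  simp only [mem_union, mem_ofPred_eq, mem_singleton_iff, not_or] at h
  simp [coverP_eq, h.1, h.2] at hz

theorem tsum_coverP_le_one (hout : ∀ i, {j | E i j}.Finite) (hpf0 : ∀ i j, 0 ≤ pf i j)
    (hpf : ∀ i, HasSum (pf i) (1 - pm i)) (x : Cover V E i₀) :
    ∑' z, coverP E i₀ pf pm x z ≤ 1 := by
  have hchildren : Summable fun z : Cover V E i₀ => if z.IsChildOf x then pf x.lbl z.lbl else 0 :=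
    summable_of_hasFiniteSupport ((finite_setOf_isChildOf (hout x.lbl)).subset fun _ hz => by
      by_contra h; exact hz (if_neg h))
  have hparent : Summable fun z : Cover V E i₀ => if z = x.parent then pm x.lbl else 0 :=
    summable_of_hasFiniteSupport ((finite_singleton x.parent).subset fun _ hz => by
      by_contra h; exact hz (if_neg h))
  have hle : ∑' z : Cover V E i₀, (if z.IsChildOf x then pf x.lbl z.lbl else 0) ≤
      1 - pm x.lbl := by
    rw [← (hpf x.lbl).tsum_eq]
    calc ∑' z : Cover V E i₀, (if z.IsChildOf x then pf x.lbl z.lbl else 0)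
        = ∑' z : {z : Cover V E i₀ | z.IsChildOf x}, pf x.lbl z.1.lbl := by
          rw [tsum_subtype {z : Cover V E i₀ | z.IsChildOf x} fun z => pf x.lbl (lbl z)]
          simp only [indicator_apply, mem_ofPred_eq]
      _ ≤ ∑' j, pf x.lbl j :=
          tsum_comp_le_tsum_of_inj (hpf x.lbl).summable (hpf0 x.lbl) fun z₁ z₂ he =>
            Subtype.ext (ext_iff.2 (by rw [z₁.2.val_eq, z₂.2.val_eq, he]))
  rw [tsum_congr (coverP_eq x), hchildren.tsum_add hparent, tsum_ite_eq]
  linarith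

theorem exists_kpow_coverP_pos (hout : ∀ i, {j | E i j}.Finite) (hpf0 : ∀ i j, 0 ≤ pf i j)
    (hpf : ∀ i j, E i j → 0 < pf i j) (hpm : ∀ i, 0 < pm i) (x : Cover V E i₀) :
    (∃ k, 0 < kpow (coverP E i₀ pf pm) k root x) ∧
      ∃ l, 0 < kpow (coverP E i₀ pf pm) l x root := by
  have hp0 := coverP_nonneg (E := E) (i₀ := i₀) hpf0 fun i => (hpm i).le
  have hfin := finite_support_coverP (i₀ := i₀) (pf := pf) (pm := pm) hout
  refine ⟨exists_kpow_pos_of_reflTransGen hp0 hfin (reflTransGen_root_of_isChildOf ?_ x),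
    exists_kpow_pos_of_reflTransGen hp0 hfin
      (Relation.reflTransGen_swap.1 (reflTransGen_root_of_isChildOf ?_ x))⟩
  · intro y z h
    rw [coverP_to_child h]
    exact hpf _ _ h.edge
  · intro y z h
    show 0 < coverP E i₀ pf pm y z
    rw [coverP_to_parent h]
    exact hpm _

end CoverWalk

theorem tsum_natCast_mul_ofReal_le_of_le_geometric {a : ℕ → ℝ} {C r : ℝ} (hC : 0 ≤ C) (hr0 : 0 ≤ r)
    (hr1 : r < 1) (ha : ∀ n, a n ≤ C * r ^ n) :
    ∑' n : ℕ, (n : ℝ≥0∞) * ENNReal.ofReal (a n) ≤ ENNReal.ofReal (C * ∑' n : ℕ, n * r ^ n) := by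
  have hsum : Summable fun n : ℕ => C * (n * r ^ n) := by
    simpa using (summable_pow_mul_geometric_of_norm_lt_one 1
      (by rwa [Real.norm_of_nonneg hr0])).mul_left C
  rw [← tsum_mul_left, ENNReal.ofReal_tsum_of_nonneg (fun n => by positivity) hsum]
  refine ENNReal.tsum_le_tsum fun n => ?_
  rw [mul_left_comm, ENNReal.ofReal_mul (Nat.cast_nonneg n), ENNReal.ofReal_natCast]
  gcongr
  exact ha n

theorem Fprime_uniformly_bounded_general
    {V : Type} (E : V → V → Prop) (i₀ : V)
    (hconn : ∀ i j : V, Relation.ReflTransGen E i j)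
    (hout : ∀ i : V, {j | E i j}.Finite)
    (pG : V → V → ℝ) (hpG0 : ∀ i j, 0 ≤ pG i j) (hpGpos : ∀ i j, 0 < pG i j ↔ E i j)
    (hpGsum : ∀ i, ∑' j : V, pG i j = 1)
    (pm : V → ℝ) (ε : ℝ) (hε0 : 0 < ε)
    (hpm : ∀ i, ε < pm i ∧ pm i < 1 - ε)
    (ε₀ : ℝ) (hε₀ : 0 < ε₀)
    (hmin : ∀ x y : Cover V E i₀,
      coverP E i₀ (fun i j => (1 - pm i) * pG i j) pm x y ≠ 0 →
      ε₀ ≤ coverP E i₀ (fun i j => (1 - pm i) * pG i j) pm x y)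
    (hρ : Filter.limsup (fun n : ℕ =>
        (kpow (coverP E i₀ (fun i j => (1 - pm i) * pG i j) pm) n Cover.root Cover.root)
          ^ ((n : ℝ)⁻¹)) Filter.atTop < 1)
    (Fc : V → ℕ → ℝ)
    (hFc : ∀ x y : Cover V E i₀, Cover.IsChildOf x y → ∀ n : ℕ,
      Fc (Cover.lbl x) n =
        taboo (coverP E i₀ (fun i j => (1 - pm i) * pG i j) pm) y n x y) :
    ∃ CF : ℝ, ∀ i : V,
      (∑' n : ℕ, (n : ℝ≥0∞) * ENNReal.ofReal (Fc i n)) ≤ ENNReal.ofReal CF := by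
  set pf : V → V → ℝ := fun i j => (1 - pm i) * pG i j
  set p := coverP E i₀ pf pm
  have hpm0 : ∀ i, 0 < pm i := fun i => hε0.trans (hpm i).1
  have hpm1 : ∀ i, pm i < 1 := fun i => (hpm i).2.trans (by linarith)
  have hpf0 : ∀ i j, 0 ≤ pf i j := fun i j => mul_nonneg (sub_nonneg.2 (hpm1 i).le) (hpG0 i j)
  have hpf : ∀ i j, E i j → 0 < pf i j := fun i j h =>
    mul_pos (sub_pos.2 (hpm1 i)) ((hpGpos i j).2 h)
  have hpG : ∀ i, HasSum (pG i) 1 := fun i =>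
    hpGsum i ▸ (Summable.of_tsum_ne_zero ((hpGsum i).trans_ne one_ne_zero)).hasSum
  have hp0 : ∀ x y, 0 ≤ p x y := coverP_nonneg hpf0 fun i => (hpm0 i).le
  have hfin : ∀ x, (support (p x)).Finite := finite_support_coverP hout
  have hrow : ∀ x, ∑' y, p x y ≤ 1 :=
    tsum_coverP_le_one hout hpf0 fun i => by simpa using (hpG i).mul_left (1 - pm i)
  obtain ⟨j₀, hj₀⟩ := exists_ne_zero_of_tsum_ne_zero (f := pG i₀) ((hpGsum i₀).trans_ne one_ne_zero)
  have hρ0 : 0 ≤ returnRadius p Cover.root := returnRadius_nonneg hp0 hfin hrow _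
  refine ⟨returnRadius p Cover.root / ε₀ * ∑' n : ℕ, n * returnRadius p Cover.root ^ n,
    fun i => ?_⟩
  obtain ⟨x, hx, rfl⟩ :=
    Cover.exists_ne_nil_lbl_eq ((hpGpos _ _).1 ((hpG0 _ _).lt_of_ne' hj₀)) (hconn j₀ i)
  have hchild := Cover.isChildOf_parent hx
  obtain ⟨⟨k, hk⟩, l, hl⟩ := exists_kpow_coverP_pos hout hpf0 hpf hpm0 x.parent
  have hstep : ε₀ ≤ p x.parent x :=
    hmin _ _ ((coverP_to_child hchild).trans_ne (hpf _ _ hchild.edge).ne')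
  refine tsum_natCast_mul_ofReal_le_of_le_geometric (div_nonneg hρ0 hε₀.le) hρ0 hρ fun n => ?_
  rw [hFc x _ hchild n]
  exact taboo_le_returnRadius_mul_pow hp0 hfin hrow hk hl hε₀ hstep n

/-- **Lemma 5 (uniform bound on `F'(-i|1)`).** Suppose the random walk on the directed
cover is transient, its nonzero one-step transition probabilities are bounded below by
some `ε₀ > 0`, and the spectral radius of the walk is strictly smaller than `1`.  Then
there is a constant `C_F` with `F'(-i|1) = Σ_n n·Fc i n ≤ C_F` for all labels `i`. -/
theorem Fprime_uniformly_bounded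
    {V : Type} [Countable V] (E : V → V → Prop) (i₀ : V)
    (hconn : ∀ i j : V, Relation.ReflTransGen E i j)
    (hout : ∀ i : V, {j | E i j}.Finite) (hin : ∀ i : V, {j | E j i}.Finite)
    (D : ℕ) (hD : ∀ i : V, {j | E i j}.ncard ≤ D ∧ {j | E j i}.ncard ≤ D)
    (pG : V → V → ℝ) (hpG0 : ∀ i j, 0 ≤ pG i j) (hpGpos : ∀ i j, 0 < pG i j ↔ E i j)
    (hpGsum : ∀ i, ∑' j : V, pG i j = 1)
    (pm : V → ℝ) (ε : ℝ) (hε0 : 0 < ε) (hε1 : ε < 1)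
    (hpm : ∀ i, ε < pm i ∧ pm i < 1 - ε)
    (htrans : returnProbA (coverP E i₀ (fun i j => (1 - pm i) * pG i j) pm)
      Cover.root < 1)
    (ε₀ : ℝ) (hε₀ : 0 < ε₀)
    (hmin : ∀ x y : Cover V E i₀,
      coverP E i₀ (fun i j => (1 - pm i) * pG i j) pm x y ≠ 0 →
      ε₀ ≤ coverP E i₀ (fun i j => (1 - pm i) * pG i j) pm x y)
    (hρ : Filter.limsup (fun n : ℕ =>
        (kpow (coverP E i₀ (fun i j => (1 - pm i) * pG i j) pm) n Cover.root Cover.root)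
          ^ ((n : ℝ)⁻¹)) Filter.atTop < 1)
    (Fc : V → ℕ → ℝ)
    (hFc : ∀ x y : Cover V E i₀, Cover.IsChildOf x y → ∀ n : ℕ,
      Fc (Cover.lbl x) n =
        taboo (coverP E i₀ (fun i j => (1 - pm i) * pG i j) pm) y n x y) :
    ∃ CF : ℝ, ∀ i : V,
      (∑' n : ℕ, (n : ℝ≥0∞) * ENNReal.ofReal (Fc i n)) ≤ ENNReal.ofReal CF :=
  Fprime_uniformly_bounded_general E i₀ hconn hout pG hpG0 hpGpos hpGsum pm ε hε0 hpm ε₀ hε₀ hmin hρ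
    Fc hFc
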